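/- Under the periodic setting (f_* = Σ_s w_s δ_{x_s} + r on 𝕋, w_s ≥ β, r(𝕋) ≤ ω < β, |y(k) − f̂_*(k)| ≤ ε ≤ (β−ω)/3 for integers |k| ≤ K, σ = √((1/π)log(12/(β−ω))), K ≥ 3τ with τ = (1/π)log(12/(β−ω))), every spike location x_s lies in X_e = {x ∈ 𝕋 : |Σ_{|k|≤K} y(k)e^{−π(kσ/K)²}e^{2πikx}| > ((6β+5ω)/11)·φ_p(0)}. -/

import Mathlib

/-!
Poisson summation identifies the smoothed Fourier series
`∑_{k ∈ ℤ} e^{-π(kσ/K)²} f̂(k) e^{2πikx}` with `(φ_p * f)(x) = ∫ φ_p(x - t) df(t)`. Since `φ_p ≥ 0`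
and `f ≥ w_s δ_{x_s}`, at a spike this is at least `w_s φ_p(0) ≥ β φ_p(0)`. Truncating the series
to `|k| ≤ K` costs at most `e^{-πσ²} φ_p(0) = (β - ω)/12 · φ_p(0)`, because
`(a + b)² ≥ a² + b²` whenever `ab ≥ 0`; replacing `f̂` by the data `y` costs at most
`ε φ_p(0) ≤ (β - ω)/3 · φ_p(0)`; and `β - 5(β - ω)/12 > (6β + 5ω)/11`.
-/

open Real MeasureTheory Set

noncomputable section

def gaussWeight (σ K : ℝ) (k : ℤ) : ℝ := Real.exp (-π * (k * σ / K) ^ 2)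

def periodizedGaussian (σ K x : ℝ) : ℝ :=
  ∑' j : ℤ, (K / σ) * Real.exp (-π * (x + j) ^ 2 * K ^ 2 / σ ^ 2)

def fourierCoeffMeasure (μ : Measure ℝ) (k : ℤ) : ℂ :=
  ∫ t, Complex.exp (-(2 * π * Complex.I * t * k)) ∂μ

end

lemma mul_le_integral_of_smul_dirac_le {α : Type*} [MeasurableSpace α]
    [MeasurableSingletonClass α] {μ : Measure α} {g : α → ℝ} {w : ℝ} {a : α} (hw : 0 ≤ w)
    (hg : 0 ≤ g) (hgμ : Integrable g μ) (hμ : ENNReal.ofReal w • Measure.dirac a ≤ μ) :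
    w * g a ≤ ∫ t, g t ∂μ :=
  calc w * g a = ∫ t, g t ∂(ENNReal.ofReal w • Measure.dirac a) := by
        rw [integral_smul_measure, integral_dirac, ENNReal.toReal_ofReal hw, smul_eq_mul]
    _ ≤ ∫ t, g t ∂μ := integral_mono_measure hμ (ae_of_all _ hg) hgμ

section GaussWeight

variable {σ K : ℝ}

lemma gaussWeight_pos (k : ℤ) : 0 < gaussWeight σ K k := exp_pos _

@[simp] lemma gaussWeight_zero : gaussWeight σ K 0 = 1 := by simp [gaussWeight]

lemma gaussWeight_neg (k : ℤ) : gaussWeight σ K (-k) = gaussWeight σ K k := by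
  simp [gaussWeight, neg_div]

lemma gaussWeight_add_le_mul {m n : ℤ} (hmn : 0 ≤ m * n) :
    gaussWeight σ K (m + n) ≤ gaussWeight σ K m * gaussWeight σ K n := by
  have hcross : 0 ≤ π * ((σ / K) ^ 2 * (2 * (m * n : ℝ))) := by
    have : (0 : ℝ) ≤ m * n := by exact_mod_cast hmn
    positivity
  simp only [gaussWeight, ← Real.exp_add, Real.exp_le_exp]
  push_cast
  rw [show ((m + n) * σ / K) ^ 2 = (m * σ / K) ^ 2 + (n * σ / K) ^ 2 +
    (σ / K) ^ 2 * (2 * (m * n)) by ring]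
  linarith

lemma summable_gaussWeight (hσ : σ ≠ 0) (hK : K ≠ 0) : Summable (gaussWeight σ K) := by
  have h := summable_pow_mul_jacobiTheta₂_term_bound 0 (T := (σ / K) ^ 2) (by positivity) 0
  refine h.congr fun k => ?_
  simp only [gaussWeight, pow_zero, one_mul, mul_zero, zero_mul, sub_zero]
  ring_nf

/-- Shifting `|k| > N` towards `0` by `N` is injective on the complement of `[-N, N]`, and each
weight there is dominated by `gaussWeight σ K N` times the weight of the shifted index. -/
lemma tsum_compl_Icc_gaussWeight_le (hσ : σ ≠ 0) (hK : K ≠ 0) (N : ℕ) :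
    ∑' k : ((Finset.Icc (-(N : ℤ)) N : Set ℤ)ᶜ : Set ℤ), gaussWeight σ K k ≤
      gaussWeight σ K N * ∑' k, gaussWeight σ K k := by
  have hout (k : ((Finset.Icc (-(N : ℤ)) N : Set ℤ)ᶜ : Set ℤ)) : (k : ℤ) < -N ∨ N < (k : ℤ) := by
    have := k.2
    simp only [mem_compl_iff, Finset.coe_Icc, mem_Icc, not_and_or, not_le] at this
    omega
  let shift (k : ((Finset.Icc (-(N : ℤ)) N : Set ℤ)ᶜ : Set ℤ)) : ℤ :=
    if 0 < (k : ℤ) then k - N else k + N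
  have hshift : Function.Injective shift := by
    intro a b h
    have := hout a; have := hout b
    simp only [shift] at h
    apply Subtype.ext
    split_ifs at h <;> omega
  have hle (k : ((Finset.Icc (-(N : ℤ)) N : Set ℤ)ᶜ : Set ℤ)) :
      gaussWeight σ K k ≤ gaussWeight σ K N * gaussWeight σ K (shift k) := by
    simp only [shift]
    split_ifs with hk
    · have := hout k
      simpa using gaussWeight_add_le_mul (σ := σ) (K := K) (m := N) (n := k - N)
        (mul_nonneg (by positivity) (by omega))
    · have := hout k
      simpa [gaussWeight_neg] using gaussWeight_add_le_mul (σ := σ) (K := K) (m := -N)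
        (n := k + N) (mul_nonneg_of_nonpos_of_nonpos (by omega) (by omega))
  have hsum := summable_gaussWeight hσ hK
  rw [← tsum_mul_left]
  exact (hsum.subtype _).tsum_le_tsum_of_inj shift hshift
    (fun k _ => mul_nonneg (gaussWeight_pos _).le (gaussWeight_pos k).le) hle (hsum.mul_left _)

end GaussWeight

section PeriodizedGaussian

variable {σ K : ℝ}

lemma tsum_gaussWeight_mul_exp (hσ : 0 < σ) (hK : 0 < K) (u : ℝ) :
    ∑' k : ℤ, (gaussWeight σ K k : ℂ) * Complex.exp (2 * π * Complex.I * k * u) =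
      periodizedGaussian σ K u := by
  have ha : 0 < ((σ / K) ^ 2 : ℝ) := by positivity
  have hsqrt : (((σ / K) ^ 2 : ℝ) : ℂ) ^ (1 / 2 : ℂ) = ((σ / K : ℝ) : ℂ) := by
    rw [show (1 / 2 : ℂ) = ((1 / 2 : ℝ) : ℂ) by norm_num, ← Complex.ofReal_cpow ha.le,
      ← Real.sqrt_eq_rpow, Real.sqrt_sq (by positivity)]
  have poisson := Complex.tsum_exp_neg_quadratic (a := ((σ / K) ^ 2 : ℝ))
    (by rwa [Complex.ofReal_re]) (Complex.I * u)
  rw [hsqrt] at poisson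
  calc ∑' k : ℤ, (gaussWeight σ K k : ℂ) * Complex.exp (2 * π * Complex.I * k * u)
      = ∑' n : ℤ, Complex.exp (-π * (((σ / K) ^ 2 : ℝ) : ℂ) * n ^ 2
          + 2 * π * (Complex.I * u) * n) := by
        refine tsum_congr fun k => ?_
        rw [gaussWeight, Complex.ofReal_exp, ← Complex.exp_add]
        push_cast
        ring_nf
    _ = ∑' n : ℤ, (((K / σ) * Real.exp (-π * (u + (-n : ℤ)) ^ 2 * K ^ 2 / σ ^ 2) : ℝ) : ℂ) := by
        rw [poisson, ← tsum_mul_left]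
        refine tsum_congr fun n => ?_
        push_cast
        rw [← mul_assoc, Complex.I_mul_I, one_div, inv_div]
        congr 2
        field_simp
        ring
    _ = periodizedGaussian σ K u := by
        rw [periodizedGaussian, Complex.ofReal_tsum]
        exact (Equiv.neg ℤ).tsum_eq fun j : ℤ =>
          (((K / σ) * Real.exp (-π * (u + j) ^ 2 * K ^ 2 / σ ^ 2) : ℝ) : ℂ)

lemma periodizedGaussian_zero (hσ : 0 < σ) (hK : 0 < K) :
    periodizedGaussian σ K 0 = ∑' k, gaussWeight σ K k := by
  have h := tsum_gaussWeight_mul_exp hσ hK 0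
  simp only [Complex.ofReal_zero, mul_zero, Complex.exp_zero, mul_one] at h
  exact_mod_cast h.symm

lemma periodizedGaussian_zero_pos (hσ : 0 < σ) (hK : 0 < K) : 0 < periodizedGaussian σ K 0 := by
  rw [periodizedGaussian_zero hσ hK]
  exact lt_of_lt_of_le (by simp) <|
    (summable_gaussWeight hσ.ne' hK.ne').le_tsum 0 fun k _ => (gaussWeight_pos k).le

lemma periodizedGaussian_nonneg (hσ : 0 < σ) (hK : 0 < K) (u : ℝ) :
    0 ≤ periodizedGaussian σ K u :=
  tsum_nonneg fun _ => mul_nonneg (div_nonneg hK.le hσ.le) (exp_pos _).le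

lemma norm_gaussWeight_mul_exp (k : ℤ) (u : ℝ) :
    ‖(gaussWeight σ K k : ℂ) * Complex.exp (2 * π * Complex.I * k * u)‖ = gaussWeight σ K k := by
  simp [Complex.norm_exp, (gaussWeight_pos k).le]

lemma abs_periodizedGaussian_le (hσ : 0 < σ) (hK : 0 < K) (u : ℝ) :
    |periodizedGaussian σ K u| ≤ periodizedGaussian σ K 0 := by
  rw [← Real.norm_eq_abs, ← Complex.norm_real, ← tsum_gaussWeight_mul_exp hσ hK,
    periodizedGaussian_zero hσ hK]
  exact tsum_of_norm_bounded (summable_gaussWeight hσ.ne' hK.ne').hasSum fun k =>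
    (norm_gaussWeight_mul_exp k u).le

lemma continuous_periodizedGaussian (hσ : 0 < σ) (hK : 0 < K) :
    Continuous (periodizedGaussian σ K) := by
  have h : Continuous fun u : ℝ =>
      ∑' k : ℤ, (gaussWeight σ K k : ℂ) * Complex.exp (2 * π * Complex.I * k * u) :=
    continuous_tsum (fun k => by fun_prop) (summable_gaussWeight hσ.ne' hK.ne')
      fun k u => (norm_gaussWeight_mul_exp k u).le
  simp_rw [tsum_gaussWeight_mul_exp hσ hK] at h
  simpa [Function.comp_def] using Complex.continuous_re.comp h

end PeriodizedGaussian

section FourierCoeffMeasure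

variable {μ : Measure ℝ} {σ K : ℝ}

lemma norm_fourierCoeffMeasure_le [IsProbabilityMeasure μ] (k : ℤ) :
    ‖fourierCoeffMeasure μ k‖ ≤ 1 := by
  simpa [fourierCoeffMeasure] using norm_integral_le_of_norm_le_const (μ := μ) (C := 1)
    (ae_of_all _ fun t => (by simp [Complex.norm_exp] :
      ‖Complex.exp (-(2 * π * Complex.I * t * k))‖ ≤ 1))

lemma integrable_periodizedGaussian_sub [IsFiniteMeasure μ] (hσ : 0 < σ) (hK : 0 < K) (x : ℝ) :
    Integrable (fun t => periodizedGaussian σ K (x - t)) μ :=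
  .of_bound
    ((continuous_periodizedGaussian hσ hK).comp (continuous_sub_left x)).aestronglyMeasurable _
    (ae_of_all _ fun t => abs_periodizedGaussian_le hσ hK (x - t))

lemma mul_periodizedGaussian_zero_le_integral [IsFiniteMeasure μ] (hσ : 0 < σ) (hK : 0 < K)
    {w a : ℝ} (hw : 0 ≤ w) (hμ : ENNReal.ofReal w • Measure.dirac a ≤ μ) :
    w * periodizedGaussian σ K 0 ≤ ∫ t, periodizedGaussian σ K (a - t) ∂μ := by
  simpa using mul_le_integral_of_smul_dirac_le (g := fun t => periodizedGaussian σ K (a - t)) hw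
    (fun t => periodizedGaussian_nonneg hσ hK _) (integrable_periodizedGaussian_sub hσ hK a) hμ

lemma hasSum_gaussWeight_mul_fourierCoeffMeasure [IsFiniteMeasure μ] (hσ : 0 < σ) (hK : 0 < K)
    (x : ℝ) :
    HasSum (fun k : ℤ => (gaussWeight σ K k : ℂ) * fourierCoeffMeasure μ k *
        Complex.exp (2 * π * Complex.I * k * x))
      (∫ t, periodizedGaussian σ K (x - t) ∂μ : ℝ) := by
  set F : ℤ → ℝ → ℂ := fun k t =>
    (gaussWeight σ K k : ℂ) * Complex.exp (2 * π * Complex.I * k * ((x - t : ℝ) : ℂ))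
  have hF (k : ℤ) (t : ℝ) : ‖F k t‖ = gaussWeight σ K k := norm_gaussWeight_mul_exp k (x - t)
  have hFint (k : ℤ) : Integrable (F k) μ :=
    .of_bound (by fun_prop : Continuous (F k)).aestronglyMeasurable _
      (ae_of_all _ fun t => (hF k t).le)
  have h := hasSum_integral_of_summable_integral_norm hFint <| by
    simpa [hF] using (summable_gaussWeight hσ.ne' hK.ne').mul_left (μ.real univ)
  simp only [F, tsum_gaussWeight_mul_exp hσ hK, integral_complex_ofReal] at h
  refine h.congr_fun fun k => ?_
  rw [fourierCoeffMeasure, ← integral_const_mul, ← integral_mul_const]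
  congr 1 with t
  rw [mul_assoc, ← Complex.exp_add]
  congr 2
  push_cast
  ring

theorem norm_sum_sub_integral_periodizedGaussian_le [IsProbabilityMeasure μ] (hσ : 0 < σ)
    (hK : 0 < K) {ε : ℝ} (hε : 0 ≤ ε) {N : ℕ} {y : ℤ → ℂ}
    (hy : ∀ k : ℤ, |k| ≤ (N : ℤ) → ‖y k - fourierCoeffMeasure μ k‖ ≤ ε) (x : ℝ) :
    ‖∑ k ∈ Finset.Icc (-(N : ℤ)) N, y k * (gaussWeight σ K k : ℂ) *
        Complex.exp (2 * π * Complex.I * k * x) - (∫ t, periodizedGaussian σ K (x - t) ∂μ : ℝ)‖ ≤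
      (ε + gaussWeight σ K N) * periodizedGaussian σ K 0 := by
  set c := gaussWeight σ K
  set e : ℤ → ℂ := fun k => Complex.exp (2 * π * Complex.I * k * x)
  set T : ℤ → ℂ := fun k => (c k : ℂ) * fourierCoeffMeasure μ k * e k
  have hc : Summable c := summable_gaussWeight hσ.ne' hK.ne'
  have hc0 (k : ℤ) : 0 ≤ c k := (gaussWeight_pos k).le
  have hT : HasSum T (∫ t, periodizedGaussian σ K (x - t) ∂μ : ℝ) :=
    hasSum_gaussWeight_mul_fourierCoeffMeasure hσ hK x
  have hnormT (k : ℤ) : ‖T k‖ ≤ c k := by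
    have := mul_le_mul_of_nonneg_left (norm_fourierCoeffMeasure_le (μ := μ) k) (hc0 k)
    simpa [T, e, Complex.norm_exp, abs_of_nonneg (hc0 k)] using this
  have hhead : ‖∑ k ∈ Finset.Icc (-(N : ℤ)) N, (y k * c k * e k - T k)‖ ≤
      ε * periodizedGaussian σ K 0 := by
    refine (norm_sum_le _ _).trans ?_
    rw [periodizedGaussian_zero hσ hK]
    refine (Finset.sum_le_sum fun k hk => ?_).trans (by
      rw [← Finset.mul_sum]
      exact mul_le_mul_of_nonneg_left (hc.sum_le_tsum _ fun k _ => hc0 k) hε)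
    rw [show y k * c k * e k - T k = (y k - fourierCoeffMeasure μ k) * (c k * e k) by ring,
      norm_mul, norm_gaussWeight_mul_exp]
    exact mul_le_mul_of_nonneg_right (hy k (abs_le.2 (Finset.mem_Icc.1 hk))) (hc0 k)
  have htail : ‖∑' k : ((Finset.Icc (-(N : ℤ)) N : Set ℤ)ᶜ : Set ℤ), T k‖ ≤
      c N * periodizedGaussian σ K 0 := by
    rw [periodizedGaussian_zero hσ hK]
    refine le_trans ?_ (tsum_compl_Icc_gaussWeight_le hσ.ne' hK.ne' N)
    exact tsum_of_norm_bounded (hc.subtype _).hasSum fun k => hnormT k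
  calc _ = ‖∑ k ∈ Finset.Icc (-(N : ℤ)) N, (y k * c k * e k - T k) -
          ∑' k : ((Finset.Icc (-(N : ℤ)) N : Set ℤ)ᶜ : Set ℤ), T k‖ := by
        rw [← hT.tsum_eq, ← hT.summable.sum_add_tsum_compl (s := Finset.Icc (-(N : ℤ)) N),
          Finset.sum_sub_distrib, sub_add_eq_sub_sub]
    _ ≤ ε * periodizedGaussian σ K 0 + c N * periodizedGaussian σ K 0 :=
        (norm_sub_le _ _).trans (add_le_add hhead htail)
    _ = _ := by ring

end FourierCoeffMeasure

theorem periodic_spikes_in_estimated_set_general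
    (S : ℕ) (w : Fin S → ℝ) (xs : Fin S → ℝ) (r : Measure ℝ)
    (β ω ε : ℝ) (K : ℕ) (hK : 0 < K) (hω : 0 ≤ ω) (hβω : ω < β) (hβ1 : β ≤ 1)
    (hε : 0 ≤ ε) (hε3 : ε ≤ (β - ω) / 3)
    (hw : ∀ s, β ≤ w s)
    (f : Measure ℝ)
    (hf : f = (∑ s : Fin S, ENNReal.ofReal (w s) • Measure.dirac (xs s)) + r)
    (hprob : IsProbabilityMeasure f)
    (σ : ℝ) (hσ : σ = Real.sqrt ((1 / π) * Real.log (12 / (β - ω))))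
    (y : ℤ → ℂ)
    (hy : ∀ k : ℤ, |k| ≤ (K : ℤ) →
      ‖y k - ∫ t, Complex.exp (-(2 * π * Complex.I * t * k)) ∂f‖ ≤ ε)
    (φp : ℝ → ℝ)
    (hφp : ∀ x : ℝ, φp x = ∑' j : ℤ, ((K : ℝ) / σ) * Real.exp (-π * (x + j) ^ 2 * K ^ 2 / σ ^ 2)) :
    ∀ s : Fin S,
      ((6 * β + 5 * ω) / 11) * φp 0 <
        ‖∑ k ∈ Finset.Icc (-(K : ℤ)) (K : ℤ), y k * Real.exp (-π * (k * σ / K) ^ 2) *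
          Complex.exp (2 * π * Complex.I * k * (xs s))‖ := by
  intro s
  obtain rfl : φp = periodizedGaussian σ K := funext hφp
  have hgap : 0 < β - ω := sub_pos.2 hβω
  have hlog : 0 < Real.log (12 / (β - ω)) := Real.log_pos <| by rw [lt_div_iff₀ hgap]; linarith
  have hσpos : 0 < σ := hσ ▸ Real.sqrt_pos.2 (by positivity)
  have hKpos : (0 : ℝ) < K := Nat.cast_pos.2 hK
  have hcK : gaussWeight σ K (K : ℤ) = (β - ω) / 12 := by
    rw [gaussWeight, Int.cast_natCast, mul_div_cancel_left₀ _ hKpos.ne', hσ,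
      Real.sq_sqrt (by positivity), ← mul_assoc, neg_mul, mul_one_div_cancel pi_pos.ne',
      neg_one_mul, Real.exp_neg, Real.exp_log (by positivity), inv_div]
  have hspike : ENNReal.ofReal (w s) • Measure.dirac (xs s) ≤ f := hf ▸
    (Finset.single_le_sum (fun _ _ => Measure.zero_le _) (Finset.mem_univ s)).trans
      (Measure.le_add_right le_rfl)
  have hlow : β * periodizedGaussian σ K 0 ≤ ∫ t, periodizedGaussian σ K (xs s - t) ∂f := by
    refine (mul_le_mul_of_nonneg_right (hw s) (periodizedGaussian_nonneg hσpos hKpos 0)).trans ?_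
    exact mul_periodizedGaussian_zero_le_integral hσpos hKpos ((hω.trans hβω.le).trans (hw s))
      hspike
  have happrox := norm_sum_sub_integral_periodizedGaussian_le hσpos hKpos hε hy (xs s)
  rw [hcK] at happrox
  change _ < ‖∑ k ∈ _, y k * (gaussWeight σ K k : ℂ) * _‖
  have hφ0 := periodizedGaussian_zero_pos hσpos hKpos
  have hnorm := norm_le_norm_add_norm_sub (∑ k ∈ Finset.Icc (-(K : ℤ)) K,
    y k * (gaussWeight σ K k : ℂ) * Complex.exp (2 * π * Complex.I * k * xs s))
    ((∫ t, periodizedGaussian σ K (xs s - t) ∂f : ℝ) : ℂ)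
  rw [Complex.norm_real, Real.norm_eq_abs] at hnorm
  linarith [le_abs_self (∫ t, periodizedGaussian σ K (xs s - t) ∂f),
    mul_le_mul_of_nonneg_right hε3 hφ0.le, mul_pos hgap hφ0]

theorem periodic_spikes_in_estimated_set
    (S : ℕ) (w : Fin S → ℝ) (xs : Fin S → ℝ) (r : Measure ℝ)
    (β ω ε : ℝ) (K : ℕ) (hK : 0 < K) (hω : 0 ≤ ω) (hβω : ω < β) (hβ1 : β ≤ 1)
    (hε : 0 ≤ ε) (hε3 : ε ≤ (β - ω) / 3)
    (hw : ∀ s, β ≤ w s)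
    (f : Measure ℝ)
    (hf : f = (∑ s : Fin S, ENNReal.ofReal (w s) • Measure.dirac (xs s)) + r)
    (hprob : IsProbabilityMeasure f)
    (hr : r Set.univ ≤ ENNReal.ofReal ω)
    (σ τ : ℝ) (hσ : σ = Real.sqrt ((1 / π) * Real.log (12 / (β - ω))))
    (hτ : τ = (1 / π) * Real.log (12 / (β - ω)))
    (hK3 : 3 * τ ≤ (K : ℝ))
    (y : ℤ → ℂ)
    (hy : ∀ k : ℤ, |k| ≤ (K : ℤ) →
      ‖y k - ∫ t, Complex.exp (-(2 * π * Complex.I * t * k)) ∂f‖ ≤ ε)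
    (φp : ℝ → ℝ)
    (hφp : ∀ x : ℝ, φp x = ∑' j : ℤ, ((K : ℝ) / σ) * Real.exp (-π * (x + j) ^ 2 * K ^ 2 / σ ^ 2)) :
    ∀ s : Fin S,
      ((6 * β + 5 * ω) / 11) * φp 0 <
        ‖∑ k ∈ Finset.Icc (-(K : ℤ)) (K : ℤ), y k * Real.exp (-π * (k * σ / K) ^ 2) *
          Complex.exp (2 * π * Complex.I * k * (xs s))‖ :=
  periodic_spikes_in_estimated_set_general S w xs r β ω ε K hK hω hβω hβ1 hε hε3 hw f hf hprob σ hσ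
    y hy φp hφp
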